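/- arXiv:1604.06765 — 12 statements merged into one kernel-verified Lean document; each statement's English description precedes it below -/
import Mathlib

section
/- If [H,G] is an interval of finite groups whose top interval [T,G] (where T is the intersection of all maximal subgroups of G containing H) contains an element g with ⟨T,g⟩ = G, then there exists g ∈ G with ⟨H,g⟩ = G. -/
/-- If the top interval `[T, G]` of an interval of finite groups `[H, G]` (where `T` is the
intersection of all maximal subgroups of `G` containing `H`) contains an element `g` with
`⟨T, g⟩ = G`, then there exists `g ∈ G` with `⟨H, g⟩ = G`. -/
theorem w_cyclic_of_top_w_cyclic (G : Type*) [Group G] [Fintype G] (H T : Subgroup G)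
    (hT : T = ⨅ M ∈ {M : Subgroup G | H ≤ M ∧ IsCoatom M}, M)
    (hg : ∃ g : G, T ⊔ Subgroup.zpowers g = ⊤) :
    ∃ g : G, H ⊔ Subgroup.zpowers g = ⊤ := by
  obtain ⟨g, hgT⟩ := hg
  refine ⟨g, ?_⟩
  by_contra hne
  have hcoat : IsCoatomic (Subgroup G) := Finite.to_isCoatomic
  rcases (hcoat.eq_top_or_exists_le_coatom (H ⊔ Subgroup.zpowers g)).resolve_left hne
    with ⟨M, hM, hle⟩
  have hHM : H ≤ M := le_trans le_sup_left hle
  have hTM : T ≤ M := by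
    rw [hT]
    exact biInf_le _ ⟨hHM, hM⟩
  have hgM : Subgroup.zpowers g ≤ M := le_trans le_sup_right hle
  have : (⊤ : Subgroup G) ≤ M := hgT ▸ sup_le hTM hgM
  exact hM.1 (top_le_iff.mp this)
end

section
/- If G is a finite group, H ≤ G, and the interval [H,G] in the subgroup lattice of G is a Boolean lattice, then there exists g ∈ G such that ⟨H,g⟩ = G. -/
open Subgroup

namespace OreBooleanAux

variable {G : Type*} [Group G]

/-- Transport of suprema along the order iso. -/
lemma e_sup {H : Subgroup G} {ι : Type*} (e : (Set.Icc H (⊤ : Subgroup G)) ≃o Set ι)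
    (x y : Set.Icc H (⊤ : Subgroup G)) :
    e ⟨x.1 ⊔ y.1, ⟨le_trans x.2.1 le_sup_left, le_top⟩⟩ = e x ∪ e y := by
  apply le_antisymm
  · have hx : x ≤ e.symm (e x ∪ e y) := by
      rw [← e.le_iff_le, e.apply_symm_apply]; exact Set.subset_union_left
    have hy : y ≤ e.symm (e x ∪ e y) := by
      rw [← e.le_iff_le, e.apply_symm_apply]; exact Set.subset_union_right
    have h : (⟨x.1 ⊔ y.1, ⟨le_trans x.2.1 le_sup_left, le_top⟩⟩ : Set.Icc H (⊤ : Subgroup G)) ≤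
        e.symm (e x ∪ e y) :=
      Subtype.coe_le_coe.mp (sup_le (Subtype.coe_le_coe.mpr hx) (Subtype.coe_le_coe.mpr hy))
    have := e.monotone h
    rwa [e.apply_symm_apply] at this
  · apply Set.union_subset
    · exact e.monotone (Subtype.coe_le_coe.mp (le_sup_left : x.1 ≤ x.1 ⊔ y.1))
    · exact e.monotone (Subtype.coe_le_coe.mp (le_sup_right : y.1 ≤ x.1 ⊔ y.1))

lemma e_bot {H : Subgroup G} {ι : Type*} (e : (Set.Icc H (⊤ : Subgroup G)) ≃o Set ι) :
    e ⟨H, ⟨le_refl H, le_top⟩⟩ = ∅ := by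
  apply le_antisymm
  · have h : (⟨H, ⟨le_refl H, le_top⟩⟩ : Set.Icc H (⊤ : Subgroup G)) ≤ e.symm ∅ :=
      Subtype.coe_le_coe.mp (e.symm (∅ : Set ι)).2.1
    have := e.monotone h
    rwa [e.apply_symm_apply] at this
  · exact Set.empty_subset _

lemma e_top {H : Subgroup G} {ι : Type*} (e : (Set.Icc H (⊤ : Subgroup G)) ≃o Set ι) :
    e ⟨⊤, ⟨le_top, le_refl ⊤⟩⟩ = Set.univ := by
  apply le_antisymm
  · exact Set.subset_univ _
  · have h : e.symm (Set.univ : Set ι) ≤ (⟨⊤, ⟨le_top, le_refl ⊤⟩⟩ :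
        Set.Icc H (⊤ : Subgroup G)) := Subtype.coe_le_coe.mp le_top
    have := e.monotone h
    rwa [e.apply_symm_apply] at this

/-- The interval `[H.subgroupOf M, ⊤]` of `M` is isomorphic to `[H, M]` in `G`. -/
def isoA (H M : Subgroup G) (hHM : H ≤ M) :
    Set.Icc (H.subgroupOf M) (⊤ : Subgroup ↥M) ≃o Set.Icc H M where
  toFun K := ⟨(K.1).map M.subtype, by
    constructor
    · have h1 : (H.subgroupOf M).map M.subtype ≤ (K.1).map M.subtype :=
        Subgroup.map_mono K.2.1
      rwa [Subgroup.subgroupOf_map_subtype, inf_eq_left.mpr hHM] at h1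
    · have := Subgroup.map_mono (le_top : K.1 ≤ (⊤ : Subgroup ↥M)) (f := M.subtype)
      calc (K.1).map M.subtype ≤ (⊤ : Subgroup ↥M).map M.subtype := this
        _ = M.subtype.range := (MonoidHom.range_eq_map _).symm
        _ = M := M.range_subtype⟩
  invFun L := ⟨(L.1).subgroupOf M, by
    constructor
    · exact Subgroup.comap_mono L.2.1
    · exact le_top⟩
  left_inv K := by
    apply Subtype.ext
    dsimp only
    exact Subgroup.comap_map_eq_self_of_injective M.subtype_injective K.1
  right_inv L := by
    apply Subtype.ext
    dsimp only
    rw [Subgroup.subgroupOf_map_subtype, inf_eq_left.mpr L.2.2]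
  map_rel_iff' {K₁ K₂} := by
    constructor
    · intro h
      exact Subtype.coe_le_coe.mp
        ((Subgroup.map_le_map_iff_of_injective M.subtype_injective).mp
          (Subtype.coe_le_coe.mpr h))
    · intro h
      exact Subtype.coe_le_coe.mp (Subgroup.map_mono (Subtype.coe_le_coe.mpr h))

/-- The interval `[H, c]` is isomorphic to the lower set of `e c`. -/
def isoB {H : Subgroup G} {ι : Type*} (e : (Set.Icc H (⊤ : Subgroup G)) ≃o Set ι)
    (c : Set.Icc H (⊤ : Subgroup G)) :
    Set.Icc H c.1 ≃o Set.Iic (e c) where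
  toFun L := ⟨e ⟨L.1, ⟨L.2.1, le_top⟩⟩, e.monotone (Subtype.coe_le_coe.mp L.2.2)⟩
  invFun s := ⟨(e.symm s.1).1, by
    constructor
    · exact (e.symm s.1).2.1
    · have : e.symm s.1 ≤ e.symm (e c) := e.symm.monotone s.2
      rw [e.symm_apply_apply] at this
      exact Subtype.coe_le_coe.mpr this⟩
  left_inv L := by
    apply Subtype.ext
    dsimp only
    have := e.symm_apply_apply (⟨L.1, ⟨L.2.1, le_top⟩⟩ : Set.Icc H (⊤ : Subgroup G))
    exact congrArg Subtype.val this
  right_inv s := by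
    apply Subtype.ext
    dsimp only
    have h : (⟨(e.symm s.1).1, ⟨(e.symm s.1).2.1, le_top⟩⟩ : Set.Icc H (⊤ : Subgroup G)) =
        e.symm s.1 := rfl
    rw [h, e.apply_symm_apply]
  map_rel_iff' {L₁ L₂} := by
    constructor
    · intro h
      exact Subtype.coe_le_coe.mp (e.le_iff_le.mp h)
    · intro h
      exact e.monotone (Subtype.coe_le_coe.mp (Subtype.coe_le_coe.mpr h))

/-- Lower set of `s` in the powerset is isomorphic to the powerset of `s`. -/
def isoC {ι : Type*} (s : Set ι) : Set.Iic s ≃o Set ↥s where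
  toFun t := Subtype.val ⁻¹' t.1
  invFun u := ⟨Subtype.val '' u, by rintro x ⟨y, _, rfl⟩; exact y.2⟩
  left_inv t := by
    apply Subtype.ext
    dsimp only
    rw [Set.image_preimage_eq_inter_range, Subtype.range_val]
    exact Set.inter_eq_self_of_subset_left t.2
  right_inv u := Set.preimage_image_eq u Subtype.val_injective
  map_rel_iff' {t₁ t₂} := by
    dsimp only [Equiv.coe_fn_mk]
    constructor
    · intro h x hx
      have hxs : x ∈ s := t₁.2 hx
      exact h (show (⟨x, hxs⟩ : ↥s).1 ∈ t₁.1 from hx)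
    · intro h
      exact Set.preimage_mono h

universe u v

theorem aux (n : ℕ) : ∀ (G : Type u) [Group G] [Fintype G] (H : Subgroup G)
    (ι : Type v) [Finite ι], Nat.card ι = n →
    (Set.Icc H (⊤ : Subgroup G) ≃o Set ι) → ∃ g : G, H ⊔ Subgroup.zpowers g = ⊤ := by
  induction n with
  | zero =>
    intro G _ _ H ι _ hcard e
    haveI : IsEmpty ι := by
      rcases Nat.card_eq_zero.mp hcard with h | h
      · exact h
      · exact absurd h (not_infinite_iff_finite.mpr ‹Finite ι›)
    haveI : Subsingleton (Set.Icc H (⊤ : Subgroup G)) := e.toEquiv.subsingleton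
    have h : (⟨H, ⟨le_refl H, le_top⟩⟩ : Set.Icc H (⊤ : Subgroup G)) =
        ⟨⊤, ⟨le_top, le_refl ⊤⟩⟩ := Subsingleton.elim _ _
    have hH : H = ⊤ := congrArg Subtype.val h
    exact ⟨1, by rw [Subgroup.zpowers_one_eq_bot, sup_bot_eq, hH]⟩
  | succ n ih =>
    intro G _ _ H ι _ hcard e
    obtain ⟨⟨i₀⟩, _⟩ := Nat.card_ne_zero.mp (by omega : Nat.card ι ≠ 0)
    set MA := e.symm ({i₀}ᶜ : Set ι) with hMA
    set AA := e.symm ({i₀} : Set ι) with hAA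
    set M := MA.1 with hM
    set A := AA.1 with hA
    have hHM : H ≤ M := MA.2.1
    have hHA : H ≤ A := AA.2.1
    have eMA : e MA = ({i₀}ᶜ : Set ι) := e.apply_symm_apply _
    have eAA : e AA = ({i₀} : Set ι) := e.apply_symm_apply _
    -- M ⊔ A = ⊤
    have hsupMA : M ⊔ A = ⊤ := by
      have h1 := e_sup e MA AA
      rw [eMA, eAA, Set.compl_union_self] at h1
      have h2 : (⟨M ⊔ A, ⟨le_trans MA.2.1 le_sup_left, le_top⟩⟩ :
          Set.Icc H (⊤ : Subgroup G)) = ⟨⊤, ⟨le_top, le_refl ⊤⟩⟩ :=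
        e.injective (h1.trans (e_top e).symm)
      exact congrArg Subtype.val h2
    -- Boolean structure on [H ∩ M, M] of rank n
    have eM : Set.Icc (H.subgroupOf M) (⊤ : Subgroup ↥M) ≃o Set ↥({i₀}ᶜ : Set ι) :=
      (isoA H M hHM).trans ((isoB e MA).trans
        ((OrderIso.setCongr _ _ (by rw [eMA])).trans (isoC ({i₀}ᶜ : Set ι))))
    have hcard' : Nat.card ↥({i₀}ᶜ : Set ι) = n := by
      have h1 : ({i₀} : Set ι).ncard + ({i₀}ᶜ : Set ι).ncard = Nat.card ι :=
        Set.ncard_add_ncard_compl _ (Set.toFinite _) (Set.toFinite _)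
      rw [Set.ncard_singleton, hcard] at h1
      rw [Nat.card_coe_set_eq]
      omega
    haveI : Fintype ↥M := Fintype.ofFinite _
    obtain ⟨m', hm'⟩ := ih ↥M (H.subgroupOf M) ↥({i₀}ᶜ : Set ι) hcard' eM
    -- transfer: H ⊔ zpowers m = M, where m = ↑m'
    have hm : H ⊔ Subgroup.zpowers (m' : G) = M := by
      have h1 := congrArg (Subgroup.map M.subtype) hm'
      rw [Subgroup.map_sup, Subgroup.subgroupOf_map_subtype, inf_eq_left.mpr hHM,
        MonoidHom.map_zpowers] at h1
      have h2 : (⊤ : Subgroup ↥M).map M.subtype = M := by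
        rw [← MonoidHom.range_eq_map, M.range_subtype]
      rw [h2] at h1
      exact h1
    -- pick a ∈ A \ H
    have hAneH : A ≠ H := by
      intro h
      have h1 : AA = ⟨H, ⟨le_refl H, le_top⟩⟩ := Subtype.ext h
      have h2 := eAA
      rw [h1, e_bot e] at h2
      exact absurd h2.symm (by simp)
    obtain ⟨a, haA, haH⟩ := SetLike.not_le_iff_exists.mp
      (fun h => hAneH (le_antisymm h hHA))
    -- ⟨H, a⟩ = A
    have hPA : H ⊔ Subgroup.zpowers a ≤ A := sup_le hHA (Subgroup.zpowers_le.mpr haA)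
    have hPeqA : H ⊔ Subgroup.zpowers a = A := by
      have h1 : e ⟨H ⊔ Subgroup.zpowers a, ⟨le_sup_left, le_top⟩⟩ ⊆ ({i₀} : Set ι) := by
        rw [← eAA]
        exact e.monotone (Subtype.coe_le_coe.mp hPA)
      rcases Set.subset_singleton_iff_eq.mp h1 with h | h
      · exfalso
        have h2 : (⟨H ⊔ Subgroup.zpowers a, ⟨le_sup_left, le_top⟩⟩ :
            Set.Icc H (⊤ : Subgroup G)) = ⟨H, ⟨le_refl H, le_top⟩⟩ :=
          e.injective (h.trans (e_bot e).symm)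
        have h3 : H ⊔ Subgroup.zpowers a = H := congrArg Subtype.val h2
        exact haH (h3 ▸ Subgroup.mem_sup_right (Subgroup.mem_zpowers a))
      · have h2 : (⟨H ⊔ Subgroup.zpowers a, ⟨le_sup_left, le_top⟩⟩ :
            Set.Icc H (⊤ : Subgroup G)) = AA := e.injective (h.trans eAA.symm)
        exact congrArg Subtype.val h2
    -- the candidate generator
    set g := (m' : G) * a with hg
    set K := H ⊔ Subgroup.zpowers g with hK
    have hHK : H ≤ K := le_sup_left
    have hgK : g ∈ K := Subgroup.mem_sup_right (Subgroup.mem_zpowers g)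
    have hKM : K ⊔ M = ⊤ := by
      have hmKM : (m' : G) ∈ K ⊔ M := Subgroup.mem_sup_right m'.2
      have haKM : a ∈ K ⊔ M := by
        have h1 : (m' : G)⁻¹ * g ∈ K ⊔ M :=
          mul_mem (inv_mem hmKM) (Subgroup.mem_sup_left hgK)
        rwa [hg, inv_mul_cancel_left] at h1
      have hAle : A ≤ K ⊔ M := by
        rw [← hPeqA]
        exact sup_le (le_trans hHK le_sup_left) (Subgroup.zpowers_le.mpr haKM)
      have h2 : (⊤ : Subgroup G) ≤ K ⊔ M := by
        rw [← hsupMA]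
        exact sup_le le_sup_right hAle
      exact le_antisymm le_top h2
    have hKA : K ⊔ A = ⊤ := by
      have haKA : a ∈ K ⊔ A := Subgroup.mem_sup_right haA
      have hmKA : (m' : G) ∈ K ⊔ A := by
        have h1 : g * a⁻¹ ∈ K ⊔ A := mul_mem (Subgroup.mem_sup_left hgK) (inv_mem haKA)
        rwa [hg, mul_inv_cancel_right] at h1
      have hMle : M ≤ K ⊔ A := by
        rw [← hm]
        exact sup_le (le_trans hHK le_sup_left) (Subgroup.zpowers_le.mpr hmKA)
      have h2 : (⊤ : Subgroup G) ≤ K ⊔ A := by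
        rw [← hsupMA]
        exact sup_le hMle le_sup_right
      exact le_antisymm le_top h2
    -- distributivity finishes the proof
    refine ⟨g, ?_⟩
    set k : Set.Icc H (⊤ : Subgroup G) := ⟨K, ⟨hHK, le_top⟩⟩ with hk
    have h1 : e ⟨k.1 ⊔ MA.1, ⟨le_trans k.2.1 le_sup_left, le_top⟩⟩ = e k ∪ e MA :=
      e_sup e k MA
    have h2 : e ⟨k.1 ⊔ AA.1, ⟨le_trans k.2.1 le_sup_left, le_top⟩⟩ = e k ∪ e AA :=
      e_sup e k AA
    have htop1 : (⟨k.1 ⊔ MA.1, ⟨le_trans k.2.1 le_sup_left, le_top⟩⟩ :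
        Set.Icc H (⊤ : Subgroup G)) = ⟨⊤, ⟨le_top, le_refl ⊤⟩⟩ := Subtype.ext hKM
    have htop2 : (⟨k.1 ⊔ AA.1, ⟨le_trans k.2.1 le_sup_left, le_top⟩⟩ :
        Set.Icc H (⊤ : Subgroup G)) = ⟨⊤, ⟨le_top, le_refl ⊤⟩⟩ := Subtype.ext hKA
    rw [htop1, e_top e] at h1
    rw [htop2, e_top e] at h2
    have h3 : e k = Set.univ := by
      have : e k = (e k ∪ e MA) ∩ (e k ∪ e AA) := by
        rw [← Set.union_inter_distrib_left, eMA, eAA, Set.compl_inter_self, Set.union_empty]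
      rw [this, ← h1, ← h2, Set.univ_inter]
    have h4 : k = ⟨⊤, ⟨le_top, le_refl ⊤⟩⟩ := e.injective (h3.trans (e_top e).symm)
    exact congrArg Subtype.val h4

end OreBooleanAux

/-- If `[H, G]` is a Boolean interval of finite groups, then there exists `g ∈ G`
with `⟨H, g⟩ = G` (Ore's theorem for Boolean intervals). -/
theorem w_cyclic_of_boolean (G : Type*) [Group G] [Fintype G] (H : Subgroup G)
    (hBool : ∃ n : ℕ, Nonempty ((Set.Icc H (⊤ : Subgroup G)) ≃o Set (Fin n))) :
    ∃ g : G, H ⊔ Subgroup.zpowers g = ⊤ := by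
  obtain ⟨n, ⟨e⟩⟩ := hBool
  exact OreBooleanAux.aux n G H (Fin n) (by simp) e
end

section
/- If G is a finite group, H ≤ G, and the interval [H,G] is top Boolean (i.e., the interval [T,G] is Boolean, where T is the intersection of all maximal subgroups of G containing H), then there exists g ∈ G with ⟨H,g⟩ = G. -/
/-!
The maximal subgroups of `G` containing `H` are exactly the coatoms of the Boolean lattice
`[T, G]`. In a Boolean lattice the complement of a coatom `M` lies below every other coatom but
not below `M`, so there is an element `x_M` lying in every maximal subgroup `M' ⊇ H` except
`M`. The product `g` of all the `x_M` then lies in no maximal subgroup containing `H`: for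
a fixed `M`, all factors but `x_M` lie in `M`. Hence `⟨H, g⟩ = G`.
-/

theorem IsCoatom.exists_not_le_and_le_of_orderIso {α β : Type*} [PartialOrder α] [OrderTop α]
    [BooleanAlgebra β] (e : α ≃o β) {m : α} (hm : IsCoatom m) :
    ∃ b, ¬ b ≤ m ∧ ∀ m', IsCoatom m' → m' ≠ m → b ≤ m' := by
  have hem : IsCoatom (e m) := (e.isCoatom_iff m).mpr hm
  refine ⟨e.symm (e m)ᶜ, ?_, fun m' hm' hne => ?_⟩
  · rw [← e.le_iff_le, e.apply_symm_apply, compl_le_self]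
    exact hem.ne_top
  · rw [← e.le_iff_le, e.apply_symm_apply, ← codisjoint_iff_compl_le_left]
    exact ((e.isCoatom_iff m').mpr hm').codisjoint_of_ne hem (e.injective.ne hne)

theorem IsCoatom.exists_not_le_and_le_of_Icc_orderIso {α β : Type*} [PartialOrder α] [OrderTop α]
    [BooleanAlgebra β] {t m : α} (e : Set.Icc t ⊤ ≃o β) (hm : IsCoatom m) (htm : t ≤ m) :
    ∃ b, ¬ b ≤ m ∧ ∀ m', IsCoatom m' → t ≤ m' → m' ≠ m → b ≤ m' := by
  let e' : Set.Ici t ≃o β := (OrderIso.setCongr _ _ Set.Icc_top.symm).trans e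
  obtain ⟨b, hbm, hb⟩ := (hm.Ici htm).exists_not_le_and_le_of_orderIso e'
  exact ⟨b, hbm, fun m' hm' htm' hne =>
    hb ⟨m', htm'⟩ (hm'.Ici htm') (fun h => hne (congrArg Subtype.val h))⟩

namespace Subgroup

variable {G : Type*} [Group G]

theorem list_prod_map_notMem {l : List (Subgroup G)} (hl : l.Nodup) {x : Subgroup G → G}
    (hx : ∀ M ∈ l, x M ∉ M) (hx' : ∀ M ∈ l, ∀ M' ∈ l, M' ≠ M → x M ∈ M')
    {M : Subgroup G} (hM : M ∈ l) : (l.map x).prod ∉ M := by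
  obtain ⟨l₁, l₂, rfl⟩ := List.append_of_mem hM
  have hMl : M ∉ l₁ ++ l₂ := (List.nodup_cons.mp (List.nodup_middle.mp hl)).1
  have hprod_mem : ∀ l' ⊆ l₁ ++ l₂, (l'.map x).prod ∈ M := fun l' hl' =>
    list_prod_mem fun y hy => by
      obtain ⟨N, hN, rfl⟩ := List.mem_map.mp hy
      have hNl : N ∈ l₁ ++ M :: l₂ := by grind
      exact hx' N hNl M hM (fun h => hMl (h ▸ hl' hN))
  rw [List.map_append, List.map_cons, List.prod_append, List.prod_cons,
    mul_mem_cancel_left (hprod_mem l₁ (List.subset_append_left _ _)),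
    mul_mem_cancel_right (hprod_mem l₂ (List.subset_append_right _ _))]
  exact hx M hM

theorem exists_forall_notMem_of_separating {S : Set (Subgroup G)} (hS : S.Finite)
    (h : ∀ M ∈ S, ∃ x ∉ M, ∀ M' ∈ S, M' ≠ M → x ∈ M') : ∃ g : G, ∀ M ∈ S, g ∉ M := by
  choose! x hx hx' using h
  have hmem : ∀ {M}, M ∈ hS.toFinset.toList ↔ M ∈ S := by simp
  refine ⟨(hS.toFinset.toList.map x).prod, fun M hM => ?_⟩
  exact list_prod_map_notMem hS.toFinset.nodup_toList (fun M hM => hx M (hmem.mp hM))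
    (fun M hM M' hM' => hx' M (hmem.mp hM) M' (hmem.mp hM')) (hmem.mpr hM)

theorem sup_zpowers_eq_top_of_forall_notMem [Finite G] {H : Subgroup G} {g : G}
    (hg : ∀ M, H ≤ M → IsCoatom M → g ∉ M) : H ⊔ zpowers g = ⊤ := by
  by_contra hne
  obtain ⟨M, hM, hle⟩ := (eq_top_or_exists_le_coatom (H ⊔ zpowers g)).resolve_left hne
  exact hg M (le_sup_left.trans hle) hM (hle (mem_sup_right (mem_zpowers g)))

end Subgroup

/-- If `[H, G]` is top Boolean (i.e. the interval `[T, G]` is Boolean, where `T` is the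
intersection of all maximal subgroups of `G` containing `H`), then there exists `g ∈ G`
with `⟨H, g⟩ = G`. -/
theorem w_cyclic_of_top_boolean (G : Type*) [Group G] [Fintype G] (H T : Subgroup G)
    (hT : T = ⨅ M ∈ {M : Subgroup G | H ≤ M ∧ IsCoatom M}, M)
    (hBool : ∃ n : ℕ, Nonempty ((Set.Icc T (⊤ : Subgroup G)) ≃o Set (Fin n))) :
    ∃ g : G, H ⊔ Subgroup.zpowers g = ⊤ := by
  obtain ⟨n, ⟨e⟩⟩ := hBool
  set S := {M : Subgroup G | H ≤ M ∧ IsCoatom M}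
  have hTle : ∀ M ∈ S, T ≤ M := fun M hM => hT ▸ biInf_le _ hM
  have hsep : ∀ M ∈ S, ∃ x ∉ M, ∀ M' ∈ S, M' ≠ M → x ∈ M' := by
    intro M hM
    obtain ⟨B, hBM, hB⟩ := hM.2.exists_not_le_and_le_of_Icc_orderIso e (hTle M hM)
    obtain ⟨x, hxB, hxM⟩ := SetLike.not_le_iff_exists.mp hBM
    exact ⟨x, hxM, fun M' hM' hne => hB M' hM'.2 (hTle M' hM') hne hxB⟩
  obtain ⟨g, hg⟩ := Subgroup.exists_forall_notMem_of_separating (Set.toFinite S) hsep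
  exact ⟨g, Subgroup.sup_zpowers_eq_top_of_forall_notMem fun M hH hM => hg M ⟨hH, hM⟩⟩
end

section
/- A finite group G is cyclic if and only if its subgroup lattice is distributive. -/
/-!
If `G` is cyclic, a subgroup is determined by its order, `H ≤ K ↔ |H| ∣ |K|`, and `H ⊓ K`, `H ⊔ K`
have orders `gcd |H| |K|` and `lcm |H| |K|`; distributivity thus reduces to
`gcd a (lcm b c) = lcm (gcd a b) (gcd a c)` in `ℕ`.

Conversely, `⟨x⟩ ⊔ ⟨xy⟩`, `⟨xy⟩ ⊔ ⟨y⟩` and `⟨x⟩ ⊔ ⟨y⟩` coincide, so distributivity gives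
`⟨x⟩ ⊔ ⟨y⟩ = (⟨x⟩ ⊓ ⟨y⟩) ⊔ ⟨xy⟩`. As `⟨x⟩ ⊓ ⟨y⟩` is a cyclic subgroup of `⟨x⟩`, proper unless
`⟨x⟩ ≤ ⟨y⟩`, induction on `|⟨x⟩|` shows that any two elements generate a cyclic subgroup. A cyclic
subgroup of maximal order then contains every element.
-/

open Subgroup

theorem Nat.gcd_lcm_distrib_left (a b c : ℕ) : gcd a (lcm b c) = lcm (gcd a b) (gcd a c) := by
  rcases eq_or_ne a 0 with rfl | ha
  · simp
  rcases eq_or_ne b 0 with rfl | hb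
  · simpa using (lcm_eq_left (gcd_dvd_left a c)).symm
  rcases eq_or_ne c 0 with rfl | hc
  · simpa using (lcm_eq_right (gcd_dvd_left a b)).symm
  apply Nat.eq_of_factorization_eq (gcd_ne_zero_left ha)
    (lcm_ne_zero (gcd_ne_zero_left ha) (gcd_ne_zero_left ha))
  intro p
  simp only [factorization_gcd ha (lcm_ne_zero hb hc), factorization_lcm hb hc,
    factorization_lcm (gcd_ne_zero_left ha) (gcd_ne_zero_left ha), factorization_gcd ha hb,
    factorization_gcd ha hc, Finsupp.inf_apply, Finsupp.sup_apply, inf_sup_left]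

namespace IsCyclic

variable {G : Type*} [Group G] [Finite G] [IsCyclic G]

theorem mem_subgroup_iff_pow_card_eq_one {K : Subgroup G} {x : G} :
    x ∈ K ↔ x ^ Nat.card K = 1 := by
  classical
  let _ := Fintype.ofFinite G
  have pow_card_of_mem {y : G} (hy : y ∈ K) : y ^ Nat.card K = 1 :=
    orderOf_dvd_iff_pow_eq_one.mp (K.orderOf_dvd_natCard hy)
  refine ⟨pow_card_of_mem, fun hx => ?_⟩
  set S := Finset.univ.filter fun a : G => a ^ Nat.card K = 1
  have hKS : (K : Set G).toFinset ⊆ S := fun y hy => by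
    simpa [S] using pow_card_of_mem (by simpa using hy)
  have hSK : S.card ≤ (K : Set G).toFinset.card := by
    simpa [Set.toFinset_card, ← Nat.card_eq_fintype_card] using
      IsCyclic.card_pow_eq_one_le (α := G) Nat.card_pos
  have hxS : x ∈ S := by simpa [S] using hx
  simpa [← Finset.eq_of_subset_of_card_le hKS hSK] using hxS

theorem subgroup_le_iff_card_dvd {H K : Subgroup G} : H ≤ K ↔ Nat.card H ∣ Nat.card K :=
  ⟨card_dvd_of_le, fun h _ hx => mem_subgroup_iff_pow_card_eq_one.mpr
    (orderOf_dvd_iff_pow_eq_one.mp ((H.orderOf_dvd_natCard hx).trans h))⟩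

theorem subgroup_eq_iff_card_eq {H K : Subgroup G} : H = K ↔ Nat.card H = Nat.card K :=
  ⟨fun h => h ▸ rfl, fun h => le_antisymm (subgroup_le_iff_card_dvd.mpr h.dvd)
    (subgroup_le_iff_card_dvd.mpr h.symm.dvd)⟩

theorem exists_subgroup_card_eq {d : ℕ} (hd : d ∣ Nat.card G) :
    ∃ H : Subgroup G, Nat.card H = d := by
  obtain ⟨g, hg⟩ := IsCyclic.exists_ofOrder_eq_natCard (α := G)
  exact ⟨zpowers (g ^ (Nat.card G / d)), by
    rw [Nat.card_zpowers, ← hg, orderOf_pow_orderOf_div (hg ▸ Nat.card_pos.ne') (hg ▸ hd)]⟩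

theorem card_inf (H K : Subgroup G) : Nat.card ↥(H ⊓ K) = Nat.gcd (Nat.card H) (Nat.card K) := by
  obtain ⟨D, hD⟩ :=
    exists_subgroup_card_eq ((Nat.gcd_dvd_left _ _).trans (card_subgroup_dvd_card H))
  refine Nat.dvd_antisymm (Nat.dvd_gcd (card_dvd_of_le inf_le_left) (card_dvd_of_le inf_le_right))
    (hD ▸ card_dvd_of_le (le_inf ?_ ?_)) <;> rw [subgroup_le_iff_card_dvd, hD]
  exacts [Nat.gcd_dvd_left _ _, Nat.gcd_dvd_right _ _]

theorem card_sup (H K : Subgroup G) : Nat.card ↥(H ⊔ K) = Nat.lcm (Nat.card H) (Nat.card K) := by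
  obtain ⟨L, hL⟩ := exists_subgroup_card_eq
    (Nat.lcm_dvd (card_subgroup_dvd_card H) (card_subgroup_dvd_card K))
  refine Nat.dvd_antisymm (hL ▸ card_dvd_of_le (sup_le ?_ ?_))
    (Nat.lcm_dvd (card_dvd_of_le le_sup_left) (card_dvd_of_le le_sup_right)) <;>
    rw [subgroup_le_iff_card_dvd, hL]
  exacts [Nat.dvd_lcm_left _ _, Nat.dvd_lcm_right _ _]

theorem subgroup_inf_sup_left (a b c : Subgroup G) : a ⊓ (b ⊔ c) = a ⊓ b ⊔ a ⊓ c := by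
  rw [subgroup_eq_iff_card_eq, card_inf, card_sup, card_sup, card_inf, card_inf,
    Nat.gcd_lcm_distrib_left]

end IsCyclic

section Distributive

variable {G : Type*} [Group G]

theorem Subgroup.zpowers_sup_zpowers_mul (x y : G) :
    zpowers x ⊔ zpowers (x * y) = zpowers x ⊔ zpowers y := by
  refine le_antisymm (sup_le le_sup_left ?_) (sup_le le_sup_left ?_) <;>
    rw [zpowers_le]
  · exact mul_mem_sup (mem_zpowers x) (mem_zpowers y)
  · have h : x⁻¹ * (x * y) ∈ zpowers x ⊔ zpowers (x * y) :=
      mul_mem (inv_mem (mem_sup_left (mem_zpowers x))) (mem_sup_right (mem_zpowers _))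
    simpa using h

theorem Subgroup.zpowers_mul_sup_zpowers (x y : G) :
    zpowers (x * y) ⊔ zpowers y = zpowers x ⊔ zpowers y := by
  refine le_antisymm (sup_le ?_ le_sup_right) (sup_le ?_ le_sup_right) <;>
    rw [zpowers_le]
  · exact mul_mem_sup (mem_zpowers x) (mem_zpowers y)
  · have h : x * y * y⁻¹ ∈ zpowers (x * y) ⊔ zpowers y :=
      mul_mem (mem_sup_left (mem_zpowers _)) (inv_mem (mem_sup_right (mem_zpowers y)))
    simpa using h

variable (hd : ∀ a b c : Subgroup G, a ⊓ (b ⊔ c) = a ⊓ b ⊔ a ⊓ c)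
include hd

theorem Subgroup.zpowers_sup_zpowers_eq_inf_sup_zpowers_mul (x y : G) :
    zpowers x ⊔ zpowers y = zpowers x ⊓ zpowers y ⊔ zpowers (x * y) := by
  let _ : DistribLattice (Subgroup G) := DistribLattice.ofInfSupLe fun a b c => (hd a b c).le
  rw [sup_inf_right, zpowers_sup_zpowers_mul, sup_comm (zpowers y), zpowers_mul_sup_zpowers,
    inf_idem]

theorem Subgroup.exists_zpowers_eq_zpowers_sup_zpowers [Finite G] (x y : G) :
    ∃ z, zpowers z = zpowers x ⊔ zpowers y := by
  induction hn : Nat.card (zpowers x) using Nat.strong_induction_on generalizing x y with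
  | _ n ih =>
  by_cases hxy : zpowers x ≤ zpowers y
  · exact ⟨y, (sup_eq_right.mpr hxy).symm⟩
  obtain ⟨k, hk⟩ := (le_zpowers_iff x (zpowers x ⊓ zpowers y)).mp inf_le_left
  have hlt : Nat.card (zpowers (x ^ k)) < n := by
    rw [← hn, ← hk]
    refine lt_of_le_of_ne (card_le_of_le inf_le_left) fun h => hxy ?_
    exact (eq_of_le_of_card_ge inf_le_left h.ge) ▸ inf_le_right
  obtain ⟨z, hz⟩ := ih _ hlt (x ^ k) (x * y) rfl
  exact ⟨z, by rw [hz, ← hk, ← zpowers_sup_zpowers_eq_inf_sup_zpowers_mul hd]⟩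

end Distributive

theorem isCyclic_of_forall_exists_zpowers_eq_sup {G : Type*} [Group G] [Finite G]
    (h : ∀ x y : G, ∃ z, zpowers z = zpowers x ⊔ zpowers y) : IsCyclic G := by
  obtain ⟨g, -, hg⟩ := Set.Finite.exists_maximalFor (fun x : G => Nat.card (zpowers x))
    Set.univ Set.finite_univ Set.univ_nonempty
  refine isCyclic_iff_exists_zpowers_eq_top.mpr ⟨g, eq_top_iff.mpr fun y _ => ?_⟩
  obtain ⟨z, hz⟩ := h g y
  have hgz : zpowers g = zpowers z :=
    eq_of_le_of_card_ge (hz ▸ le_sup_left) (hg (Set.mem_univ z) (card_le_of_le (hz ▸ le_sup_left)))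
  exact hgz ▸ hz ▸ mem_sup_right (mem_zpowers y)

/-- A finite group is cyclic if and only if its subgroup lattice is distributive. -/
theorem isCyclic_iff_subgroup_lattice_distributive (G : Type*) [Group G] [Fintype G] :
    IsCyclic G ↔
      ∀ a b c : Subgroup G, a ⊓ (b ⊔ c) = (a ⊓ b) ⊔ (a ⊓ c) := by
  refine ⟨fun _ => IsCyclic.subgroup_inf_sup_left, fun hd => ?_⟩
  exact isCyclic_of_forall_exists_zpowers_eq_sup (exists_zpowers_eq_zpowers_sup_zpowers hd)
end

section
/- Let [H,G] be a Boolean interval of finite groups of rank n+1 with atoms and complements, and let V be a finite-dimensional complex representation of G. If H is strictly contained in the pointwise stabilizer G_{(V^H)}, then the alternating sum ∑_{K ∈ [H,G]} μ(H,K)·dim(V^K) equals 0, where μ is the Möbius function of the interval. -/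
/-- The fixed-point subspace `V^H` of a representation. -/
def Representation.fixedBy {G V : Type*} [Group G] [AddCommGroup V] [Module ℂ V]
    (ρ : Representation ℂ G V) (H : Subgroup G) : Submodule ℂ V where
  carrier := {v : V | ∀ h ∈ H, ρ h v = v}
  zero_mem' := by intro h _; simp
  add_mem' := by
    intro a b ha hb h hh
    simp [map_add, ha h hh, hb h hh]
  smul_mem' := by
    intro c a ha h hh
    simp [map_smul, ha h hh]

/-- The pointwise stabilizer `G_{(X)}` of a set of vectors. -/
def Representation.pointwiseStabilizer {G V : Type*} [Group G] [AddCommGroup V] [Module ℂ V]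
    (ρ : Representation ℂ G V) (X : Set V) : Subgroup G where
  carrier := {g : G | ∀ x ∈ X, ρ g x = x}
  one_mem' := by intro x _; simp
  mul_mem' := by
    intro a b ha hb x hx
    simp [map_mul, Module.End.mul_apply, hb x hx, ha x hx]
  inv_mem' := by
    intro a ha x hx
    have h1 : ρ a⁻¹ (ρ a x) = x := by
      rw [← Module.End.mul_apply, ← map_mul, inv_mul_cancel, map_one, Module.End.one_apply]
    calc ρ a⁻¹ x = ρ a⁻¹ (ρ a x) := by rw [ha x hx]
    _ = x := h1

/-!
Parametrize the Boolean interval `[H, G]` by the subsets of its atoms. The recursion for `μ` then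
forces `μ(H, K) = (-1) ^ |K|`. Since `S = G_{(V^H)}` fixes `V^H ⊇ V^K`, we have `V^{K ⊔ S} = V^K`,
so `dim V^K` is unchanged when `K` is joined with an atom `t ≤ S`, which exists because `H < S`.
Pairing each `K` with `t ≰ K` with `K ⊔ t`, whose Möbius value has the opposite sign, the
terms of the sum cancel.
-/

open Finset

namespace Finset

variable {α R : Type*} [Ring R]

theorem eq_neg_one_pow_card_of_sum_powerset_eq_zero {μ : Finset α → R} (h₀ : μ ∅ = 1)
    (h : ∀ A : Finset α, A.Nonempty → ∑ B ∈ A.powerset, μ B = 0) (A : Finset α) :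
    μ A = (-1) ^ #A := by
  classical
  induction A using Finset.strongInduction with
  | H A ih =>
    rcases A.eq_empty_or_nonempty with rfl | hA
    · simpa using h₀
    have hsign := congrArg (Int.cast : ℤ → R) (sum_powerset_neg_one_pow_card_of_nonempty hA)
    push_cast at hsign
    have hsub : ∑ B ∈ A.powerset.erase A, μ B = ∑ B ∈ A.powerset.erase A, (-1) ^ #B :=
      sum_congr rfl fun B hB =>
        ih B (ssubset_iff_subset_ne.2 ⟨mem_powerset.1 (mem_of_mem_erase hB), ne_of_mem_erase hB⟩)
    have hrec := h A hA
    rw [← add_sum_erase _ _ (mem_powerset_self A)] at hsign hrec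
    rw [hsub] at hrec
    exact add_right_cancel (hrec.trans hsign.symm)

theorem sum_powerset_neg_one_pow_card_mul_eq_zero [DecidableEq α] {s : Finset α} {t : α}
    (ht : t ∈ s) {f : Finset α → R} (hf : ∀ A ⊆ s.erase t, f (insert t A) = f A) :
    ∑ A ∈ s.powerset, (-1) ^ #A * f A = 0 := by
  rw [← insert_erase ht, sum_powerset_insert (notMem_erase t s), ← sum_add_distrib]
  refine sum_eq_zero fun A hA => ?_
  rw [mem_powerset] at hA
  rw [card_insert_of_notMem fun htA => notMem_erase t s (hA htA), hf A hA, pow_succ]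
  noncomm_ring

end Finset

namespace OrderIso

variable {α ι : Type*} [Lattice α] {a b : α} (e : Set.Icc a b ≃o Finset ι)

theorem coe_symm_empty : (e.symm ∅ : α) = a := by
  have hab : a ≤ b := (e.symm ∅).2.1.trans (e.symm ∅).2.2
  exact le_antisymm (Subtype.coe_le_coe.2 (e.symm_apply_le.2 (empty_subset (e ⟨a, le_rfl, hab⟩))))
    (e.symm ∅).2.1

theorem coe_symm_injective : Function.Injective fun A => (e.symm A : α) :=
  Subtype.val_injective.comp e.symm.injective

theorem coe_symm_union [DecidableEq ι] (A B : Finset ι) :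
    (e.symm (A ∪ B) : α) = (e.symm A : α) ⊔ e.symm B := by
  rw [← sup_eq_union, map_sup, Set.Icc.coe_sup]

theorem Icc_coe_symm_eq_image_powerset (A : Finset ι) :
    Set.Icc a (e.symm A : α) = (fun B => (e.symm B : α)) '' A.powerset := by
  ext K
  constructor
  · rintro ⟨haK, hKA⟩
    have hK : K ∈ Set.Icc a b := ⟨haK, hKA.trans (e.symm A).2.2⟩
    exact ⟨e ⟨K, hK⟩, mem_powerset.2 (e.le_symm_apply.1 hKA), by simp⟩
  · rintro ⟨B, hB, rfl⟩
    exact ⟨(e.symm B).2.1, e.symm.monotone (mem_powerset.1 hB)⟩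

theorem finsum_mem_Icc_eq_sum_symm [Fintype ι] {M : Type*} [AddCommMonoid M] (g : α → M) :
    ∑ᶠ K ∈ Set.Icc a b, g K = ∑ A, g (e.symm A) := by
  have hrange : Set.range (fun A => (e.symm A : α)) = Set.Icc a b := by
    rw [Set.range_comp', e.symm.surjective.range_eq, Set.image_univ, Subtype.range_coe]
  conv_lhs => rw [← hrange]
  rw [finsum_mem_range e.coe_symm_injective, finsum_eq_sum_of_fintype]

theorem mobius_symm_eq_neg_one_pow_card {R : Type*} [Ring R] {μ : α → R} (hμa : μ a = 1)
    (hμ : ∀ K, a < K → K ≤ b → ∑ᶠ x ∈ Set.Icc a K, μ x = 0) (A : Finset ι) :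
    μ (e.symm A) = (-1) ^ #A := by
  refine eq_neg_one_pow_card_of_sum_powerset_eq_zero (μ := fun A => μ (e.symm A))
    (by rwa [coe_symm_empty]) (fun A hA => ?_) A
  have hlt : a < e.symm A := by
    refine lt_of_le_of_ne (e.symm A).2.1 fun h => hA.ne_empty ?_
    exact e.coe_symm_injective (h.symm.trans e.coe_symm_empty.symm)
  have := hμ _ hlt (e.symm A).2.2
  rwa [Icc_coe_symm_eq_image_powerset, finsum_mem_image
    e.coe_symm_injective.injOn, finsum_mem_coe_finset] at this

end OrderIso

theorem finsum_mem_Icc_mobius_mul_eq_zero_of_sup_eq {α ι R : Type*} [Lattice α] [Fintype ι]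
    [Ring R] {a b : α} (e : Set.Icc a b ≃o Finset ι) {μ f : α → R} (hμa : μ a = 1)
    (hμ : ∀ K, a < K → K ≤ b → ∑ᶠ x ∈ Set.Icc a K, μ x = 0) {s : α} (hs : s ∈ Set.Icc a b)
    (has : a < s) (hf : ∀ K ∈ Set.Icc a b, f (K ⊔ s) = f K) :
    ∑ᶠ K ∈ Set.Icc a b, μ K * f K = 0 := by
  classical
  set T := e ⟨s, hs⟩
  have hT : (e.symm T : α) = s := by simp [T]
  obtain ⟨t, ht⟩ : T.Nonempty := by
    refine nonempty_iff_ne_empty.2 fun h => has.ne ?_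
    rw [← hT, h, e.coe_symm_empty]
  have hf_union : ∀ A, f (e.symm (A ∪ T)) = f (e.symm A) := fun A => by
    rw [e.coe_symm_union, hT, hf _ (e.symm A).2]
  rw [e.finsum_mem_Icc_eq_sum_symm, ← powerset_univ]
  simp_rw [e.mobius_symm_eq_neg_one_pow_card hμa hμ]
  refine sum_powerset_neg_one_pow_card_mul_eq_zero (mem_univ t) fun A _ => ?_
  rw [← hf_union, insert_union, insert_eq_of_mem (mem_union_right A ht), hf_union]

namespace Representation

variable {G V : Type*} [Group G] [AddCommGroup V] [Module ℂ V] (ρ : Representation ℂ G V)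

theorem mem_fixedBy_iff_le_pointwiseStabilizer {K : Subgroup G} {v : V} :
    v ∈ ρ.fixedBy K ↔ K ≤ ρ.pointwiseStabilizer {v} := by
  simp [fixedBy, pointwiseStabilizer, SetLike.le_def]

theorem fixedBy_antitone : Antitone ρ.fixedBy :=
  fun _ _ hKK' _ hv k hk => hv k (hKK' hk)

theorem fixedBy_sup (K K' : Subgroup G) :
    ρ.fixedBy (K ⊔ K') = ρ.fixedBy K ⊓ ρ.fixedBy K' := by
  ext v
  simp only [Submodule.mem_inf, mem_fixedBy_iff_le_pointwiseStabilizer, sup_le_iff]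

theorem subset_fixedBy_pointwiseStabilizer (X : Set V) :
    X ⊆ ρ.fixedBy (ρ.pointwiseStabilizer X) :=
  fun x hx _ hg => hg x hx

theorem fixedBy_sup_pointwiseStabilizer_fixedBy {H K : Subgroup G} (hHK : H ≤ K) :
    ρ.fixedBy (K ⊔ ρ.pointwiseStabilizer (ρ.fixedBy H)) = ρ.fixedBy K := by
  rw [fixedBy_sup, inf_eq_left]
  exact (ρ.fixedBy_antitone hHK).trans (ρ.subset_fixedBy_pointwiseStabilizer _)

end Representation

theorem sum_mobius_mul_dim_fixed_eq_zero_general (G : Type) [Group G]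
    (V : Type) [AddCommGroup V] [Module ℂ V]
    (ρ : Representation ℂ G V) (H : Subgroup G)
    (hBool : ∃ n : ℕ, Nonempty ((Set.Icc H (⊤ : Subgroup G)) ≃o Set (Fin n)))
    (μ : Subgroup G → ℤ) (hμH : μ H = 1)
    (hμ : ∀ K : Subgroup G, H < K → ∑ᶠ L ∈ Set.Icc H K, μ L = 0)
    (hlt : H < ρ.pointwiseStabilizer (ρ.fixedBy H : Set V)) :
    ∑ᶠ K ∈ Set.Icc H (⊤ : Subgroup G),
      μ K * (Module.finrank ℂ (ρ.fixedBy K) : ℤ) = 0 := by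
  obtain ⟨n, ⟨e⟩⟩ := hBool
  refine finsum_mem_Icc_mobius_mul_eq_zero_of_sup_eq (e.trans Fintype.finsetOrderIsoSet.symm)
    hμH (fun K hHK _ => hμ K hHK) ⟨hlt.le, le_top⟩ hlt fun K hK => ?_
  rw [ρ.fixedBy_sup_pointwiseStabilizer_fixedBy hK.1]

/-- If `[H,G]` is Boolean and `H` is strictly contained in the pointwise stabilizer of
`V^H`, then `∑_{K ∈ [H,G]} μ(H,K)·dim(V^K) = 0`. Here `μ` is the Möbius function of the
interval `[H,G]`, characterized by `μ(H,H) = 1` and `∑_{L ∈ [H,K]} μ(H,L) = 0` for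
`H < K`. -/
theorem sum_mobius_mul_dim_fixed_eq_zero (G : Type) [Group G] [Fintype G]
    (V : Type) [AddCommGroup V] [Module ℂ V] [FiniteDimensional ℂ V]
    (ρ : Representation ℂ G V) (H : Subgroup G)
    (hBool : ∃ n : ℕ, Nonempty ((Set.Icc H (⊤ : Subgroup G)) ≃o Set (Fin n)))
    (μ : Subgroup G → ℤ) (hμH : μ H = 1)
    (hμ : ∀ K : Subgroup G, H < K → ∑ᶠ L ∈ Set.Icc H K, μ L = 0)
    (hlt : H < ρ.pointwiseStabilizer (ρ.fixedBy H : Set V)) :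
    ∑ᶠ K ∈ Set.Icc H (⊤ : Subgroup G),
      μ K * (Module.finrank ℂ (ρ.fixedBy K) : ℤ) = 0 :=
  sum_mobius_mul_dim_fixed_eq_zero_general G V ρ H hBool μ hμH hμ hlt
end

section
/- If the interval [H,G] of finite groups is Boolean, then the Euler totient φ(H,G), i.e., the number of right cosets Hg with ⟨Hg⟩ = G, is strictly positive. -/
open Pointwise

open Subgroup

lemma ore_step {G : Type*} [Group G] (H A M : Subgroup G) (a b : G)
    (hA : A = H ⊔ closure {a}) (hM : M = H ⊔ closure {b})
    (hmeet : A ⊓ M = H)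
    (hdist : (H ⊔ closure {a*b}) ⊔ (A ⊓ M) =
      ((H ⊔ closure {a*b}) ⊔ A) ⊓ ((H ⊔ closure {a*b}) ⊔ M)) :
    H ⊔ closure {a*b} = A ⊔ M := by
  set X := H ⊔ closure {a*b} with hX
  have hab : a * b ∈ X := mem_sup_right (subset_closure rfl)
  have haA : a ∈ A := hA ▸ mem_sup_right (subset_closure rfl)
  have hbM : b ∈ M := hM ▸ mem_sup_right (subset_closure rfl)
  have hHA : H ≤ A := hA ▸ le_sup_left
  have hHM : H ≤ M := hM ▸ le_sup_left
  have hXAM : X ≤ A ⊔ M := by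
    rw [hX]
    refine sup_le (le_trans hHA le_sup_left) ?_
    rw [closure_le]
    rintro x rfl
    exact mul_mem (mem_sup_left haA) (mem_sup_right hbM)
  have hXA : X ⊔ A = A ⊔ M := by
    apply le_antisymm (sup_le hXAM le_sup_left)
    refine sup_le le_sup_right ?_
    rw [hM]
    refine sup_le (le_trans hHA le_sup_right) ?_
    rw [closure_le, Set.singleton_subset_iff]
    have : a⁻¹ * (a * b) ∈ X ⊔ A := mul_mem (inv_mem (mem_sup_right haA)) (mem_sup_left hab)
    simpa using this
  have hXM : X ⊔ M = A ⊔ M := by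
    apply le_antisymm (sup_le hXAM le_sup_right)
    refine sup_le ?_ le_sup_right
    rw [hA]
    refine sup_le (le_trans hHM le_sup_right) ?_
    rw [closure_le, Set.singleton_subset_iff]
    have : (a * b) * b⁻¹ ∈ X ⊔ M := mul_mem (mem_sup_left hab) (inv_mem (mem_sup_right hbM))
    simpa using this
  have : X = X ⊔ (A ⊓ M) := by
    rw [hmeet]
    exact (sup_eq_left.mpr (by rw [hX]; exact le_sup_left)).symm
  rw [this, hdist, hXA, hXM, inf_idem]

lemma ore_boolean {G : Type*} [Group G] (H : Subgroup G) {n : ℕ}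
    (e : (Set.Icc H (⊤ : Subgroup G)) ≃o Set (Fin n)) (s : Finset (Fin n)) :
    ∃ g : G, H ⊔ closure {g} = (e.symm ↑s : Subgroup G) := by
  have hbotmem : H ∈ Set.Icc H (⊤ : Subgroup G) := ⟨le_rfl, le_top⟩
  set bot : Set.Icc H (⊤ : Subgroup G) := ⟨H, hbotmem⟩ with hbotdef
  have hbotle : ∀ x : Set.Icc H (⊤ : Subgroup G), bot ≤ x := fun x => x.2.1
  have hbot : e bot = ∅ := by
    have h1 : e bot ⊆ e (e.symm ∅) := e.monotone (hbotle _)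
    rw [e.apply_symm_apply] at h1
    exact Set.subset_empty_iff.mp h1
  have hdist : ∀ x y z : Set.Icc H (⊤ : Subgroup G),
      x ⊔ (y ⊓ z) = (x ⊔ y) ⊓ (x ⊔ z) := by
    intro x y z
    apply e.injective
    simp only [e.map_sup, e.map_inf]
    exact sup_inf_left _ _ _
  induction s using Finset.induction with
  | empty =>
    refine ⟨1, ?_⟩
    rw [Subgroup.closure_singleton_one, sup_bot_eq]
    have : e.symm ↑(∅ : Finset (Fin n)) = bot := by
      apply e.injective
      rw [e.apply_symm_apply, hbot]
      simp
    rw [this]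
  | @insert i t hi IH =>
    obtain ⟨b, hb⟩ := IH
    set A : Set.Icc H (⊤ : Subgroup G) := e.symm {i} with hAdef
    set M : Set.Icc H (⊤ : Subgroup G) := e.symm ↑t with hMdef
    have hAne : (A : Subgroup G) ≠ H := by
      intro h
      have : A = bot := Subtype.ext h
      rw [hAdef] at this
      have := congrArg e this
      rw [e.apply_symm_apply, hbot] at this
      exact Set.singleton_ne_empty i this
    have hHA : H ≤ (A : Subgroup G) := A.2.1
    obtain ⟨a, haA, haH⟩ := SetLike.exists_of_lt (lt_of_le_of_ne hHA (Ne.symm hAne))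
    have hAcyc : (A : Subgroup G) = H ⊔ closure {a} := by
      set B := H ⊔ closure {a} with hBdef
      have hBA : B ≤ (A : Subgroup G) := by
        refine sup_le hHA ?_
        rw [closure_le, Set.singleton_subset_iff]
        exact haA
      have hBmem : B ∈ Set.Icc H (⊤ : Subgroup G) := ⟨le_sup_left, le_top⟩
      have hsub : e ⟨B, hBmem⟩ ⊆ ({i} : Set (Fin n)) := by
        have : e ⟨B, hBmem⟩ ⊆ e A := e.monotone hBA
        rwa [hAdef, e.apply_symm_apply] at this
      rcases Set.subset_singleton_iff_eq.mp hsub with h | h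
      · exfalso
        have : (⟨B, hBmem⟩ : Set.Icc H (⊤ : Subgroup G)) = bot := e.injective (by rw [h, hbot])
        have hBH : B = H := congrArg Subtype.val this
        exact haH (hBH ▸ mem_sup_right (subset_closure rfl) : a ∈ H)
      · have : (⟨B, hBmem⟩ : Set.Icc H (⊤ : Subgroup G)) = A := by
          apply e.injective
          rw [h, hAdef, e.apply_symm_apply]
        exact (congrArg Subtype.val this).symm
    have hmeet : (A : Subgroup G) ⊓ (M : Subgroup G) = H := by
      have : A ⊓ M = bot := by
        apply e.injective
        rw [e.map_inf, hAdef, hMdef, e.apply_symm_apply, e.apply_symm_apply, hbot]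
        exact Set.singleton_inter_eq_empty.mpr (by exact_mod_cast hi)
      exact congrArg Subtype.val this
    have key := ore_step H A M a b hAcyc hb.symm hmeet ?_
    · refine ⟨a * b, ?_⟩
      rw [key]
      have : A ⊔ M = e.symm ↑(insert i t) := by
        rw [hAdef, hMdef, ← e.symm.map_sup]
        congr 1
        rw [Finset.coe_insert, Set.insert_eq]
        rfl
      exact congrArg Subtype.val this
    · have hXmem : (H ⊔ closure {a*b}) ∈ Set.Icc H (⊤ : Subgroup G) := ⟨le_sup_left, le_top⟩
      exact congrArg Subtype.val (hdist ⟨H ⊔ closure {a*b}, hXmem⟩ A M)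

/-- If the interval `[H,G]` is Boolean, then the Euler totient `φ(H,G)`, the number of
right cosets `Hg` generating `G`, is strictly positive. -/
theorem euler_totient_pos_of_boolean (G : Type*) [Group G] [Fintype G] (H : Subgroup G)
    (hBool : ∃ n : ℕ, Nonempty ((Set.Icc H (⊤ : Subgroup G)) ≃o Set (Fin n))) :
    0 < Set.ncard {s : Set G | ∃ g : G,
      s = (H : Set G) * ({g} : Set G) ∧ Subgroup.closure s = ⊤} := by
  obtain ⟨n, ⟨e⟩⟩ := hBool
  obtain ⟨g, hg⟩ := ore_boolean H e Finset.univ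
  have htop : (e.symm ↑(Finset.univ : Finset (Fin n)) : Subgroup G) = ⊤ := by
    have hT : (⟨⊤, ⟨le_top, le_rfl⟩⟩ : Set.Icc H (⊤ : Subgroup G)) ≤
        e.symm ↑(Finset.univ : Finset (Fin n)) := by
      rw [e.le_symm_apply]
      rw [Finset.coe_univ]
      exact Set.subset_univ _
    exact top_le_iff.mp hT
  rw [htop] at hg
  have hgmem : g ∈ (H : Set G) * ({g} : Set G) := by
    simpa using Set.mul_mem_mul (H.one_mem) (Set.mem_singleton g)
  have hcl : Subgroup.closure ((H : Set G) * ({g} : Set G)) = ⊤ := by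
    rw [eq_top_iff, ← hg]
    refine sup_le ?_ ?_
    · intro h hh
      have hmem : h * g ∈ (H : Set G) * ({g} : Set G) :=
        Set.mul_mem_mul hh (Set.mem_singleton g)
      have := mul_mem (subset_closure hmem) (inv_mem (subset_closure hgmem))
      simpa using this
    · rw [closure_le, Set.singleton_subset_iff]
      exact subset_closure hgmem
  have hne : {s : Set G | ∃ g : G,
      s = (H : Set G) * ({g} : Set G) ∧ Subgroup.closure s = ⊤}.Nonempty :=
    ⟨(H : Set G) * ({g} : Set G), g, rfl, hcl⟩
  exact (Set.ncard_pos (Set.toFinite _)).mpr hne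
end

section
/- Let [H,G] be an interval of finite groups with |G:H| = p^m a prime power and p not dividing μ(H,G). Then the dual Euler totient φ̂(H,G) = ∑_{K ∈ [H,G]} μ(H,K)·|G:K| is nonzero. -/
/-- If `|G:H| = p^m` is a prime power and `p` does not divide `μ(H,G)`, then the dual
Euler totient `φ̂(H,G) = ∑_{K ∈ [H,G]} μ(H,K)·|G:K|` is nonzero. Here `μ` is the Möbius
function of the interval `[H,G]`. -/
theorem dual_euler_totient_ne_zero_of_prime_power_index
    (G : Type*) [Group G] [Fintype G] (H : Subgroup G) (p m : ℕ) (hp : p.Prime)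
    (hidx : H.index = p ^ m)
    (μ : Subgroup G → ℤ) (hμH : μ H = 1)
    (hμ : ∀ K : Subgroup G, H < K → ∑ᶠ L ∈ Set.Icc H K, μ L = 0)
    (hpμ : ¬ (p : ℤ) ∣ μ ⊤) :
    ∑ᶠ K ∈ Set.Icc H (⊤ : Subgroup G), μ K * (K.index : ℤ) ≠ 0 := by
  classical
  intro h0
  have hs : (Set.Icc H (⊤ : Subgroup G)).Finite := Set.toFinite _
  rw [finsum_mem_eq_finite_toFinset_sum _ hs] at h0
  have htop : (⊤ : Subgroup G) ∈ hs.toFinset := by simp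
  rw [← Finset.add_sum_erase _ _ htop] at h0
  have hdvd : (p : ℤ) ∣ ∑ K ∈ hs.toFinset.erase ⊤, μ K * (K.index : ℤ) := by
    apply Finset.dvd_sum
    intro K hK
    have hK' := Finset.mem_erase.mp hK
    have hle : H ≤ K := (hs.mem_toFinset.mp hK'.2).1
    have hdvd' : K.index ∣ p ^ m := hidx ▸ Subgroup.index_dvd_of_le hle
    obtain ⟨j, hjle, hj⟩ := (Nat.dvd_prime_pow hp).mp hdvd'
    have hj0 : j ≠ 0 := by
      intro h
      subst h
      simp only [pow_zero] at hj
      exact hK'.1 (Subgroup.index_eq_one.mp hj)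
    have : (p : ℤ) ∣ (K.index : ℤ) := by
      rw [hj]
      exact_mod_cast dvd_pow_self p hj0 |>.natCast
    exact Dvd.dvd.mul_left this _
  rw [Subgroup.index_top] at h0
  apply hpμ
  have : μ ⊤ = -∑ K ∈ hs.toFinset.erase ⊤, μ K * (K.index : ℤ) := by push_cast at h0; linarith
  rw [this]
  exact hdvd.neg_right
end

section
/- If [H,G] is a Boolean group-complemented interval of finite groups, then the dual Euler totient equals the Euler totient: ∑_{K ∈ [H,G]} μ(H,K)·|G:K| = ∑_{K ∈ [H,G]} μ(K,G)·|K:H|. -/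
/-!
Sending `K` to its complement `Kᶜ` in `[H, G]` is an order-reversing involution of the interval,
since in a Boolean lattice complements are unique. Such an anti-automorphism carries the recursion
defining `μ(H, ·)` onto the one defining `μ(·, G)`, so `μ(H, K) = μ(Kᶜ, G)`. On the other hand
`K Kᶜ = G` makes `Kᶜ` act transitively on `G ⧸ K` with stabiliser `K ⊓ Kᶜ = H`, so
`|G : K| = |Kᶜ : H|`. Reindexing the first sum by `K ↦ Kᶜ` gives the second.
-/

open Pointwise Set

theorem OrderIso.map_eq_compl_of_inf_eq_of_sup_eq {α β : Type*} [Lattice α] [BooleanAlgebra β]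
    {a b : α} (e : Icc a b ≃o β) {x y : Icc a b} (hinf : (x : α) ⊓ y = a)
    (hsup : (x : α) ⊔ y = b) : e y = (e x)ᶜ := by
  have : Fact (a ≤ b) := ⟨x.2.1.trans x.2.2⟩
  have hxy : IsCompl x y :=
    ⟨disjoint_iff.2 (Subtype.ext hinf), codisjoint_iff.2 (Subtype.ext hsup)⟩
  exact (e.isCompl_iff.1 hxy).symm.eq_compl

section Complement

variable {α β : Type*} [Lattice α] [BooleanAlgebra β] {a b : α} {e : Icc a b ≃o β}
  {c : α → α}

theorem leftInvOn_of_map_eq_compl (hc_maps : MapsTo c (Icc a b) (Icc a b))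
    (hc_compl : ∀ x (hx : x ∈ Icc a b), e ⟨c x, hc_maps hx⟩ = (e ⟨x, hx⟩)ᶜ) :
    LeftInvOn c c (Icc a b) := fun x hx => by
  have h := hc_compl (c x) (hc_maps hx)
  rw [hc_compl x hx, compl_compl] at h
  exact congrArg Subtype.val (e.injective h)

theorem antitoneOn_of_map_eq_compl (hc_maps : MapsTo c (Icc a b) (Icc a b))
    (hc_compl : ∀ x (hx : x ∈ Icc a b), e ⟨c x, hc_maps hx⟩ = (e ⟨x, hx⟩)ᶜ) :
    AntitoneOn c (Icc a b) := fun x hx y hy hxy => by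
  have h : e ⟨c y, hc_maps hy⟩ ≤ e ⟨c x, hc_maps hx⟩ := by
    rw [hc_compl x hx, hc_compl y hy]
    exact compl_le_compl (e.monotone hxy)
  exact e.le_iff_le.1 h

end Complement

section Involution

variable {α : Type*} [PartialOrder α] {a b : α} {c : α → α}

theorem apply_left_eq_right_of_antitoneOn (hab : a ≤ b) (hc_maps : MapsTo c (Icc a b) (Icc a b))
    (hc_invol : LeftInvOn c c (Icc a b)) (hc_anti : AntitoneOn c (Icc a b)) : c a = b := by
  have hb : b ∈ Icc a b := right_mem_Icc.2 hab
  refine le_antisymm (hc_maps (left_mem_Icc.2 hab)).2 ?_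
  calc b = c (c b) := (hc_invol hb).symm
    _ ≤ c a := hc_anti (left_mem_Icc.2 hab) (hc_maps hb) (hc_maps hb).1

theorem bijOn_Icc_of_antitoneOn {x : α} (hx : x ∈ Icc a b)
    (hc_maps : MapsTo c (Icc a b) (Icc a b)) (hc_invol : LeftInvOn c c (Icc a b))
    (hc_anti : AntitoneOn c (Icc a b)) : BijOn c (Icc a x) (Icc (c x) b) := by
  have hlow : Icc a x ⊆ Icc a b := Icc_subset_Icc_right hx.2
  have hup : Icc (c x) b ⊆ Icc a b := Icc_subset_Icc_left (hc_maps hx).1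
  refine InvOn.bijOn ⟨hc_invol.mono hlow, hc_invol.mono hup⟩ ?_ ?_
  · intro y hy
    exact ⟨hc_anti (hlow hy) hx hy.2, (hc_maps (hlow hy)).2⟩
  · intro z hz
    refine ⟨(hc_maps (hup hz)).1, ?_⟩
    calc c z ≤ c (c x) := hc_anti (hc_maps hx) (hup hz) hz.1
      _ = x := hc_invol hx

theorem mobius_eq_comp_of_antitoneOn [Finite α] (hc_maps : MapsTo c (Icc a b) (Icc a b))
    (hc_invol : LeftInvOn c c (Icc a b)) (hc_anti : AntitoneOn c (Icc a b))
    {μdown μup : α → ℤ} (hdown_a : μdown a = 1)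
    (hdown : ∀ x, a < x → x ≤ b → ∑ᶠ y ∈ Icc a x, μdown y = 0) (hup_b : μup b = 1)
    (hup : ∀ x, a ≤ x → x < b → ∑ᶠ y ∈ Icc x b, μup y = 0) :
    ∀ x ∈ Icc a b, μdown x = μup (c x) := by
  intro x hx
  induction x using WellFoundedLT.induction with
  | _ x ih =>
  have hab : a ≤ b := hx.1.trans hx.2
  have hca := apply_left_eq_right_of_antitoneOn hab hc_maps hc_invol hc_anti
  rcases hx.1.eq_or_lt with rfl | hax
  · rw [hdown_a, hca, hup_b]
  have hcx : c x < b := by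
    refine (hc_maps hx).2.lt_of_ne fun h => hax.ne' ?_
    rw [← hc_invol hx, h, ← hca, hc_invol (left_mem_Icc.2 hab)]
  have hsum : ∑ᶠ y ∈ Icc a x, μdown y = ∑ᶠ y ∈ Icc a x, μup (c y) := by
    rw [hdown x hax hx.2, finsum_mem_eq_of_bijOn c
      (bijOn_Icc_of_antitoneOn hx hc_maps hc_invol hc_anti) (fun _ _ => rfl),
      hup _ (hc_maps hx).1 hcx]
  have hbelow : ∑ᶠ y ∈ Ico a x, μdown y = ∑ᶠ y ∈ Ico a x, μup (c y) :=
    finsum_mem_congr rfl fun y hy => ih y hy.2 ⟨hy.1, hy.2.le.trans hx.2⟩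
  rw [← Ico_insert_right hx.1, finsum_mem_insert _ right_notMem_Ico (toFinite _),
    finsum_mem_insert _ right_notMem_Ico (toFinite _), hbelow] at hsum
  exact add_right_cancel hsum

end Involution

theorem Subgroup.relIndex_eq_index_of_mul_eq_univ {G : Type*} [Group G] {K L : Subgroup G}
    (h : (K : Set G) * (L : Set G) = univ) : K.relIndex L = K.index := by
  have hsmul (l : L) : l • ((1 : G) : G ⧸ K) = ((l : G) : G ⧸ K) :=
    congrArg ((↑) : G → G ⧸ K) (mul_one (l : G))
  have hstab : MulAction.stabilizer L ((1 : G) : G ⧸ K) = K.subgroupOf L := by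
    ext l
    rw [MulAction.mem_stabilizer_iff, hsmul, QuotientGroup.eq, Subgroup.mem_subgroupOf, mul_one,
      inv_mem_iff]
  have horbit : MulAction.orbit L ((1 : G) : G ⧸ K) = univ := by
    refine eq_univ_of_forall fun q => ?_
    induction q using QuotientGroup.induction_on with
    | H g =>
    obtain ⟨k, hk, l, hl, hkl⟩ := eq_univ_iff_forall.1 h g⁻¹
    refine ⟨⟨l⁻¹, L.inv_mem hl⟩, (hsmul _).trans ?_⟩
    rw [QuotientGroup.eq, inv_inv, ← inv_inv g, ← hkl, mul_inv_rev, mul_inv_cancel_left]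
    exact K.inv_mem hk
  rw [Subgroup.relIndex, ← hstab, MulAction.index_stabilizer, horbit, ncard_univ]
  rfl

/-- For a Boolean group-complemented interval `[H,G]`, the dual Euler totient equals the
Euler totient: `∑_{K ∈ [H,G]} μ(H,K)·|G:K| = ∑_{K ∈ [H,G]} μ(K,G)·|K:H|`. Here `μdown K`
is the Möbius function `μ(H,K)` and `μup K` is `μ(K,G)`, each characterized by the usual
recursion. -/
theorem dual_euler_totient_eq_euler_totient_of_group_complemented
    (G : Type*) [Group G] [Fintype G] (H : Subgroup G)
    (hBool : ∃ n : ℕ, Nonempty ((Set.Icc H (⊤ : Subgroup G)) ≃o Set (Fin n)))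
    (hcompl : ∀ K ∈ Set.Icc H (⊤ : Subgroup G), ∃ Kc ∈ Set.Icc H (⊤ : Subgroup G),
      K ⊓ Kc = H ∧ K ⊔ Kc = ⊤ ∧ (K : Set G) * (Kc : Set G) = Set.univ)
    (μdown : Subgroup G → ℤ) (hμdownH : μdown H = 1)
    (hμdown : ∀ K : Subgroup G, H < K → ∑ᶠ L ∈ Set.Icc H K, μdown L = 0)
    (μup : Subgroup G → ℤ) (hμupTop : μup ⊤ = 1)
    (hμup : ∀ K : Subgroup G, H ≤ K → K < ⊤ → ∑ᶠ L ∈ Set.Icc K (⊤ : Subgroup G), μup L = 0) :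
    ∑ᶠ K ∈ Set.Icc H (⊤ : Subgroup G), μdown K * (K.index : ℤ) =
      ∑ᶠ K ∈ Set.Icc H (⊤ : Subgroup G), μup K * (H.relIndex K : ℤ) := by
  obtain ⟨n, ⟨e⟩⟩ := hBool
  choose! c hc_mem hc_inf hc_sup hc_mul using hcompl
  have hc_maps : MapsTo c (Icc H ⊤) (Icc H ⊤) := fun K hK => hc_mem K hK
  have hc_compl : ∀ K (hK : K ∈ Icc H ⊤), e ⟨c K, hc_maps hK⟩ = (e ⟨K, hK⟩)ᶜ :=
    fun K hK => e.map_eq_compl_of_inf_eq_of_sup_eq (hc_inf K hK) (hc_sup K hK)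
  have hc_invol := leftInvOn_of_map_eq_compl hc_maps hc_compl
  have hc_anti := antitoneOn_of_map_eq_compl hc_maps hc_compl
  have hμ := mobius_eq_comp_of_antitoneOn hc_maps hc_invol hc_anti hμdownH
    (fun K hK _ => hμdown K hK) hμupTop hμup
  have hindex : ∀ K ∈ Icc H ⊤, K.index = H.relIndex (c K) := fun K hK => by
    rw [← hc_inf K hK, Subgroup.inf_relIndex_right,
      Subgroup.relIndex_eq_index_of_mul_eq_univ (hc_mul K hK)]
  exact finsum_mem_eq_of_bijOn c (InvOn.bijOn ⟨hc_invol, hc_invol⟩ hc_maps hc_maps)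
    fun K hK => by rw [hμ K hK, hindex K hK]
end

section
/- If [H,G] is a Boolean interval of finite groups that is Dedekind (i.e., HgK = KgH for all K ∈ [H,G] and g ∈ G), then it is group-complemented: KK^∁ = G for all K ∈ [H,G]. -/
open Pointwise

/-- A Dedekind Boolean interval `[H,G]` (i.e. `HgK = KgH` for all `K ∈ [H,G]` and
`g ∈ G`) is group-complemented: `KK^∁ = G` for every `K ∈ [H,G]` with lattice
complement `K^∁`. -/
theorem group_complemented_of_dedekind (G : Type*) [Group G] [Fintype G] (H : Subgroup G)
    (hBool : ∃ n : ℕ, Nonempty ((Set.Icc H (⊤ : Subgroup G)) ≃o Set (Fin n)))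
    (hded : ∀ K ∈ Set.Icc H (⊤ : Subgroup G), ∀ g : G,
      (H : Set G) * ({g} : Set G) * (K : Set G) = (K : Set G) * ({g} : Set G) * (H : Set G)) :
    ∀ K ∈ Set.Icc H (⊤ : Subgroup G), ∀ Kc ∈ Set.Icc H (⊤ : Subgroup G),
      K ⊓ Kc = H → K ⊔ Kc = ⊤ → (K : Set G) * (Kc : Set G) = Set.univ := by
  intro K hK Kc hKc hinf hsup
  have hHK : H ≤ K := hK.1
  have hHKc : H ≤ Kc := hKc.1
  -- Kc K ⊆ K Kc
  have h1 : (Kc : Set G) * (K : Set G) ⊆ (K : Set G) * (Kc : Set G) := by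
    rintro x ⟨kc, hkc, k, hk, rfl⟩
    have heq := hded K hK kc
    have hx : kc * k ∈ (H : Set G) * ({kc} : Set G) * (K : Set G) :=
      ⟨1 * kc, ⟨1, H.one_mem, kc, rfl, rfl⟩, k, hk, by group⟩
    rw [heq] at hx
    obtain ⟨a, ⟨k', hk', c, hc, rfl⟩, h, hh, hxe⟩ := hx
    obtain rfl : c = kc := hc
    have hxe' : k' * c * h = c * k := hxe
    exact ⟨k', hk', c * h, Kc.mul_mem hkc (hHKc hh),
      by show k' * (c * h) = c * k; rw [← mul_assoc]; exact hxe'⟩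
  -- K Kc ⊆ Kc K
  have h2 : (K : Set G) * (Kc : Set G) ⊆ (Kc : Set G) * (K : Set G) := by
    rintro x ⟨k, hk, kc, hkc, rfl⟩
    have heq := hded Kc hKc k
    have hx : k * kc ∈ (H : Set G) * ({k} : Set G) * (Kc : Set G) :=
      ⟨1 * k, ⟨1, H.one_mem, k, rfl, rfl⟩, kc, hkc, by group⟩
    rw [heq] at hx
    obtain ⟨a, ⟨c', hc', c, hc, rfl⟩, h, hh, hxe⟩ := hx
    obtain rfl : c = k := hc
    have hxe' : c' * c * h = c * kc := hxe
    exact ⟨c', hc', c * h, K.mul_mem hk (hHK hh),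
      by show c' * (c * h) = c * kc; rw [← mul_assoc]; exact hxe'⟩
  -- K Kc is a subgroup
  let P : Subgroup G :=
    { carrier := (K : Set G) * (Kc : Set G)
      one_mem' := ⟨1, K.one_mem, 1, Kc.one_mem, mul_one 1⟩
      mul_mem' := by
        rintro a b ⟨k, hk, kc, hkc, rfl⟩ ⟨k', hk', kc', hkc', rfl⟩
        obtain ⟨k2, hk2, kc2, hkc2, he⟩ := h1 ⟨kc, hkc, k', hk', rfl⟩
        refine ⟨k * k2, K.mul_mem hk hk2, kc2 * kc', Kc.mul_mem hkc2 hkc', ?_⟩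
        show k * k2 * (kc2 * kc') = k * kc * (k' * kc')
        have he' : k2 * kc2 = kc * k' := he
        rw [mul_assoc k k2, ← mul_assoc k2, he']
        group
      inv_mem' := by
        rintro a ⟨k, hk, kc, hkc, rfl⟩
        exact h1 ⟨kc⁻¹, Kc.inv_mem hkc, k⁻¹, K.inv_mem hk, by group⟩ }
  have hKP : K ≤ P := fun k hk => ⟨k, hk, 1, Kc.one_mem, mul_one k⟩
  have hKcP : Kc ≤ P := fun c hc => ⟨1, K.one_mem, c, hc, one_mul c⟩
  have htop : (⊤ : Subgroup G) ≤ P := hsup ▸ sup_le hKP hKcP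
  exact Set.eq_univ_of_forall fun x => htop (Subgroup.mem_top x)
end

section
/- Let G be a finite group, H ≤ G, and [H,K] the bottom interval of [H,G] (K being the join of all atoms of [H,G]). If there is an irreducible complex representation W of K with K_{(W^H)} = H, then there is an irreducible complex representation V of G with G_{(V^H)} = H. -/
/-!
Every irreducible representation `W` of `K` embeds `K`-equivariantly into an irreducible
representation `V` of `G`: `W` embeds into its coinduction to `G`, and among the subquotients of
that representation admitting a nonzero `K`-map from `W`, one of minimal dimension is irreducible;
the map is injective because `W` is irreducible. If `G_{(V^H)}` were larger than `H`, it would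
contain an atom `A` of `[H, G]`, so `A ≤ K`. The embedding carries `W^H` into `V^H`, hence every
element of `A` fixes `W^H` pointwise, and `A ≤ K_{(W^H)} = H`, a contradiction.
-/

open CategoryTheory Representation

universe u

instance Representation.Subrepresentation.nontrivial {k G V : Type*} [Semiring k] [Monoid G]
    [AddCommMonoid V] [Module k V] {ρ : Representation k G V} [Nontrivial V] :
    Nontrivial (Subrepresentation ρ) := by
  refine ⟨⊥, ⊤, fun h => ?_⟩
  obtain ⟨x, hx⟩ := exists_ne (0 : V)
  have : x ∈ (⊤ : Subrepresentation ρ) := Submodule.mem_top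
  rw [← h] at this
  exact hx this

theorem Representation.exists_injective_intertwiningMap_coind {k G W : Type*} [Field k] [Group G]
    [AddCommGroup W] [Module k W] (K : Subgroup G) (σ : Representation k K W) :
    ∃ f : σ.IntertwiningMap ((coind K.subtype σ).comp K.subtype), Function.Injective f := by
  classical
  let A := Rep.of σ
  -- `Rep.indToCoindAux A 1 w` is `g ↦ σ g w` on `K`, extended by zero.
  let f : W →ₗ[k] coindV K.subtype σ :=
    (Rep.indToCoindAux A 1).codRestrict _ fun w s g => Rep.indToCoindAux_mul_snd 1 g w s
  refine ⟨f.intertwiningMap_of_isIntertwiningMap _ _ fun s w => ?_, fun v w h => ?_⟩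
  · ext g
    change Rep.indToCoindAux A 1 (σ s w) g = Rep.indToCoindAux A 1 w (g * s)
    calc Rep.indToCoindAux A 1 (σ s w) g
        = Rep.indToCoindAux A (s * (s : G)⁻¹) (A.ρ s w) g := by rw [mul_inv_cancel]
      _ = Rep.indToCoindAux A (1 * (s : G)⁻¹) w g := by
        rw [Rep.indToCoindAux_mul_fst, one_mul]
      _ = Rep.indToCoindAux A 1 w (g * s) := Rep.indToCoindAux_fst_mul_inv ..
  · have h1 : Rep.indToCoindAux A 1 v 1 = Rep.indToCoindAux A 1 w 1 := congr(($h : G → W) 1)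
    rwa [Rep.indToCoindAux_self, Rep.indToCoindAux_self] at h1

namespace FDRep

section Simple

variable {k G : Type u} [Field k] [Group G]

theorem simple_of_isIrreducible (X : FDRep k G) [IsIrreducible X.ρ] : Simple X := by
  have : Simple ((forget₂ (FDRep k G) (Rep k G)).obj X) :=
    (simple_obj_iff Rep.toModuleMonoidAlgebra _).mp <|
      simple_iff_isSimpleModule.mpr (inferInstanceAs (IsSimpleModule _ (asModule X.ρ)))
  exact (forget₂ (FDRep k G) (Rep k G)).simple_of_simple_obj X

theorem nontrivial_of_simple (X : FDRep k G) [Simple X] : Nontrivial X := by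
  by_contra h
  rw [not_nontrivial_iff_subsingleton] at h
  refine id_nonzero X ((forget₂ (FDRep k G) (Rep k G)).map_injective ?_)
  ext x
  exact h.elim (α := X) _ _

theorem isIrreducible_of_simple (X : FDRep k G) [Simple X] : IsIrreducible X.ρ := by
  have := nontrivial_of_simple X
  refine { eq_bot_or_eq_top := fun S => ?_ }
  let ι : S.toRepresentation.IntertwiningMap X.ρ :=
    S.toSubmodule.subtype.intertwiningMap_of_isIntertwiningMap _ _ fun _ _ => rfl
  let i : FDRep.of S.toRepresentation ⟶ X :=
    (forget₂ (FDRep k G) (Rep k G)).preimage (Rep.ofHom ι)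
  have hi : (forget₂ (FDRep k G) (Rep k G)).map i = Rep.ofHom ι := Functor.map_preimage _ _
  have : Mono i := (forget₂ (FDRep k G) (Rep k G)).mono_of_mono_map <| by
    rw [hi]
    exact (Rep.mono_iff_injective (Rep.ofHom ι)).2 Subtype.val_injective
  by_cases h0 : i = 0
  · left
    have hι : ι = 0 := by
      rw [← Rep.hom_ofHom ι, ← hi, h0, Functor.map_zero]
      rfl
    refine Subrepresentation.toSubmodule_injective (eq_bot_iff.mpr fun x hx => ?_)
    exact congr($hι ⟨x, hx⟩)
  · right
    have := isIso_of_mono_of_nonzero h0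
    have hsurj : Function.Surjective ι := by
      have : Epi (Rep.ofHom ι) :=
        hi ▸ inferInstanceAs (Epi ((forget₂ (FDRep k G) (Rep k G)).map i))
      exact (Rep.epi_iff_surjective (Rep.ofHom ι)).1 this
    refine Subrepresentation.toSubmodule_injective (eq_top_iff.mpr fun x _ => ?_)
    obtain ⟨y, rfl⟩ := hsurj x
    exact y.2

end Simple

section Restriction

variable {k G : Type u} {K W : Type*} [Field k] [Group G] [AddCommGroup W] [Module k W]

theorem exists_isIrreducible_of_intertwiningMap_ne_zero [Monoid K] (φ : K →* G)
    (σ : Representation k K W) (U : FDRep k G) (f : σ.IntertwiningMap (U.ρ.comp φ)) (hf : f ≠ 0) :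
    ∃ (V : FDRep k G) (g : σ.IntertwiningMap (V.ρ.comp φ)), IsIrreducible V.ρ ∧ g ≠ 0 := by
  induction hn : Module.finrank k U using Nat.strong_induction_on generalizing U with
  | _ n ih =>
  have : Nontrivial U := by
    by_contra h
    rw [not_nontrivial_iff_subsingleton] at h
    exact hf (IntertwiningMap.ext (LinearMap.ext fun w => h.elim (α := U) _ _))
  by_cases hirr : ∀ S : Subrepresentation U.ρ, S = ⊥ ∨ S = ⊤
  · exact ⟨U, f, { eq_bot_or_eq_top := hirr }, hf⟩
  push Not at hirr
  obtain ⟨S, hS_bot, hS_top⟩ := hirr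
  by_cases hfS : ∀ w, f w ∈ S.toSubmodule
  · let g : σ.IntertwiningMap (S.toRepresentation.comp φ) :=
      (f.toLinearMap.codRestrict S.toSubmodule hfS).intertwiningMap_of_isIntertwiningMap _ _
        fun s w => Subtype.ext (IntertwiningMap.isIntertwining _ _ f s w)
    refine ih _ ?_ (FDRep.of S.toRepresentation) g (fun hg => hf ?_) rfl
    · exact hn ▸ Submodule.finrank_lt fun h => hS_top (Subrepresentation.toSubmodule_injective h)
    · ext w
      exact congr(($hg w : U))
  · push Not at hfS
    obtain ⟨w, hw⟩ := hfS
    let Q := Representation.quotient U.ρ S.toSubmodule fun g _ hx => S.apply_mem_toSubmodule g hx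
    let g : σ.IntertwiningMap (Q.comp φ) :=
      (S.toSubmodule.mkQ ∘ₗ f.toLinearMap).intertwiningMap_of_isIntertwiningMap _ _
        fun s w => by simp [IntertwiningMap.isIntertwining, Q]
    refine ih _ ?_ (FDRep.of Q) g (fun hg => hw ?_) rfl
    · have hS : Module.finrank k S.toSubmodule ≠ 0 := by
        rw [Ne, Submodule.finrank_eq_zero]
        exact fun h => hS_bot (Subrepresentation.toSubmodule_injective h)
      have := S.toSubmodule.finrank_quotient_add_finrank
      change Module.finrank k (U ⧸ S.toSubmodule) < n
      omega
    · exact (Submodule.Quotient.mk_eq_zero _).mp congr($hg w)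

theorem exists_isIrreducible_injective_intertwiningMap {W : Type u} [AddCommGroup W] [Module k W]
    [FiniteDimensional k W] [Finite G] (K : Subgroup G) (σ : Representation k K W)
    [IsIrreducible σ] :
    ∃ (V : FDRep k G) (f : σ.IntertwiningMap (V.ρ.comp K.subtype)),
      IsIrreducible V.ρ ∧ Function.Injective f := by
  obtain ⟨ι, hι⟩ := exists_injective_intertwiningMap_coind K σ
  have : Nontrivial W := IsSimpleModule.nontrivial (MonoidAlgebra k K) (asModule σ)
  obtain ⟨V, f, hV, hf⟩ := exists_isIrreducible_of_intertwiningMap_ne_zero K.subtype σ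
    (FDRep.of (coind K.subtype σ)) ι fun h => by
      obtain ⟨w, hw⟩ := exists_ne (0 : W)
      exact hw (hι (congr($h w).trans (map_zero ι).symm))
  exact ⟨V, f, hV, (IsIrreducible.injective_or_eq_zero f).resolve_right hf⟩

end Restriction

end FDRep

theorem Representation.le_pointwiseStabilizer_fixedBy {G V : Type*} [Group G] [AddCommGroup V]
    [Module ℂ V] (ρ : Representation ℂ G V) (H : Subgroup G) :
    H ≤ ρ.pointwiseStabilizer (ρ.fixedBy H) :=
  fun _ hh _ hx => hx _ hh

theorem Representation.pointwiseStabilizer_fixedBy_subgroupOf_le {G V W : Type*} [Group G]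
    [AddCommGroup V] [Module ℂ V] [AddCommGroup W] [Module ℂ W] {H K : Subgroup G} (hHK : H ≤ K)
    {ρ : Representation ℂ G V} {σ : Representation ℂ K W}
    (f : σ.IntertwiningMap (ρ.comp K.subtype)) (hf : Function.Injective f) :
    (ρ.pointwiseStabilizer (ρ.fixedBy H)).subgroupOf K ≤
      σ.pointwiseStabilizer (σ.fixedBy (H.subgroupOf K)) := by
  intro a ha w hw
  have hfw : f w ∈ ρ.fixedBy H := fun h hh => by
    have := IntertwiningMap.isIntertwining _ _ f ⟨h, hHK hh⟩ w
    rw [hw ⟨h, hHK hh⟩ hh] at this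
    exact this.symm
  apply hf
  rw [IntertwiningMap.isIntertwining _ _ f]
  exact ha (f w) hfw

/-- If `K` is the join of all atoms of the interval `[H,G]` (its bottom interval being
`[H,K]`) and there is an irreducible complex representation `W` of `K` with
`K_{(W^H)} = H`, then there is an irreducible complex representation `V` of `G` with
`G_{(V^H)} = H`. -/
theorem linearly_primitive_of_bottom_linearly_primitive
    (G : Type) [Group G] [Fintype G] (H K : Subgroup G)
    (hK : K = ⨆ A ∈ {A : Subgroup G | H ⋖ A}, A)
    (hbot : ∃ W : FDRep ℂ ↥K, CategoryTheory.Simple W ∧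
      Representation.pointwiseStabilizer W.ρ
        (Representation.fixedBy W.ρ (H.subgroupOf K) : Set W) = H.subgroupOf K) :
    ∃ V : FDRep ℂ G, CategoryTheory.Simple V ∧
      Representation.pointwiseStabilizer V.ρ
        (Representation.fixedBy V.ρ H : Set V) = H := by
  obtain ⟨W, hW, hWstab⟩ := hbot
  have := FDRep.isIrreducible_of_simple W
  obtain ⟨V, f, hV, hf⟩ := FDRep.exists_isIrreducible_injective_intertwiningMap K W.ρ
  refine ⟨V, FDRep.simple_of_isIrreducible V, ?_⟩
  have hHL := le_pointwiseStabilizer_fixedBy V.ρ H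
  refine le_antisymm ?_ hHL
  by_contra hLH
  obtain ⟨A, hHA, hAL⟩ := exists_covBy_le_of_lt (hHL.lt_of_not_ge hLH)
  have hAK : A ≤ K := hK ▸ le_biSup id hHA
  refine hHA.lt.not_ge fun a ha => ?_
  have := pointwiseStabilizer_fixedBy_subgroupOf_le (hHA.le.trans hAK) f hf
    (show (⟨a, hAK ha⟩ : K) ∈ _ from hAL ha)
  rwa [hWstab] at this
end

section
/- Let [H,G] be an interval of finite groups such that there exists x ∈ G with ⟨H, gxg⁻¹⟩ = G for all g ∈ G. Then the cyclic group ⟨x⟩ acts fixed-point-freely by right multiplication on the coset poset C(H,G). Conversely, if ⟨H,x⟩ = G and ⟨x⟩ acts fixed-point-freely on C(H,G), then ⟨H, gxg⁻¹⟩ = G for all g ∈ G. -/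
open Pointwise

lemma coset_fix_iff {G : Type*} [Group G] (K : Subgroup G) (g y : G) :
    (K : Set G) * ({g} : Set G) * ({y} : Set G) = (K : Set G) * ({g} : Set G) ↔
      g * y * g⁻¹ ∈ K := by
  simp only [Set.mul_singleton]
  constructor
  · intro h
    have h1 : g * y ∈ (fun a => a * g) '' (K : Set G) := by
      rw [← h]
      exact ⟨g, ⟨1, K.one_mem, by simp⟩, rfl⟩
    obtain ⟨k, hk, he⟩ := h1
    have : g * y * g⁻¹ = k := by rw [← he]; group
    exact this ▸ hk
  · intro hm
    ext a
    constructor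
    · rintro ⟨b, ⟨k, hk, rfl⟩, rfl⟩
      exact ⟨k * (g * y * g⁻¹), K.mul_mem hk hm, by group⟩
    · rintro ⟨k, hk, rfl⟩
      exact ⟨(k * (g * y⁻¹ * g⁻¹)) * g, ⟨k * (g * y⁻¹ * g⁻¹),
        K.mul_mem hk (by rw [show g * y⁻¹ * g⁻¹ = (g * y * g⁻¹)⁻¹ by group]; exact K.inv_mem hm), rfl⟩, by group⟩

/-- If `⟨H, gxg⁻¹⟩ = G` for all `g`, then the cyclic group `⟨x⟩` acts
fixed-point-freely by right multiplication on the coset poset `C(H,G)` (no proper coset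
`Kg`, `H ≤ K < G`, is fixed by every element of `⟨x⟩`); and conversely, if
`⟨H, x⟩ = G` and `⟨x⟩` acts fixed-point-freely on `C(H,G)`, then `⟨H, gxg⁻¹⟩ = G`
for all `g ∈ G`. -/
theorem fixed_point_free_iff_conjugates_generate
    (G : Type*) [Group G] [Fintype G] (H : Subgroup G) (x : G) :
    ((∀ g : G, H ⊔ Subgroup.zpowers (g * x * g⁻¹) = ⊤) →
      ¬ ∃ (K : Subgroup G) (g : G), H ≤ K ∧ K ≠ ⊤ ∧
        ∀ y ∈ Subgroup.zpowers x,
          (K : Set G) * ({g} : Set G) * ({y} : Set G) = (K : Set G) * ({g} : Set G)) ∧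
    ((H ⊔ Subgroup.zpowers x = ⊤ ∧
      ¬ ∃ (K : Subgroup G) (g : G), H ≤ K ∧ K ≠ ⊤ ∧
        ∀ y ∈ Subgroup.zpowers x,
          (K : Set G) * ({g} : Set G) * ({y} : Set G) = (K : Set G) * ({g} : Set G)) →
      ∀ g : G, H ⊔ Subgroup.zpowers (g * x * g⁻¹) = ⊤) := by
  constructor
  · rintro hall ⟨K, g, hHK, hKtop, hfix⟩
    have hx : g * x * g⁻¹ ∈ K :=
      (coset_fix_iff K g x).mp (hfix x (Subgroup.mem_zpowers x))
    exact hKtop (top_unique (hall g ▸ sup_le hHK ((Subgroup.zpowers_le).mpr hx)))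
  · rintro ⟨hgen, hnofix⟩ g
    by_contra hne
    apply hnofix
    refine ⟨H ⊔ Subgroup.zpowers (g * x * g⁻¹), g, le_sup_left, hne, ?_⟩
    rintro y ⟨n, rfl⟩
    rw [coset_fix_iff]
    show g * x ^ n * g⁻¹ ∈ _
    rw [← conj_zpow]
    exact Subgroup.mem_sup_right (Subgroup.zpow_mem _ (Subgroup.mem_zpowers _) n)
end

section
/- Let [H,G] be a Boolean interval of finite groups, with atoms K_1,…,K_n and coatoms M_i = ∨_{j≠i} K_j. Let Y = X ∨ K_i for some X ∈ [H,G] with K_i ⊄ X, and g ∈ G. Then Xg = Yg ∩ M_i if and only if g ∈ M_i. -/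
open Pointwise

/-- In a Boolean interval `[H,G]`, let `K` be an atom with lattice complement `M` (a
coatom), `X ∈ [H,G]` with `K ⊄ X`, and `Y = X ⊔ K`. Then for `g ∈ G`,
`Xg = Yg ∩ M` if and only if `g ∈ M`. -/
theorem coset_eq_inter_coatom_iff_mem (G : Type*) [Group G] [Fintype G]
    (H X Y K M : Subgroup G)
    (hBool : ∃ n : ℕ, Nonempty ((Set.Icc H (⊤ : Subgroup G)) ≃o Set (Fin n)))
    (hX : X ∈ Set.Icc H (⊤ : Subgroup G))
    (hatom : H ⋖ K)
    (hM : M ∈ Set.Icc H (⊤ : Subgroup G))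
    (hinf : K ⊓ M = H) (hsup : K ⊔ M = ⊤)
    (hY : Y = X ⊔ K) (hKX : ¬ K ≤ X) (g : G) :
    (X : Set G) * ({g} : Set G) = ((Y : Set G) * ({g} : Set G)) ∩ (M : Set G) ↔
      g ∈ M := by
  obtain ⟨n, ⟨e⟩⟩ := hBool
  have hK : K ∈ Set.Icc H (⊤ : Subgroup G) := ⟨hatom.lt.le, le_top⟩
  set x : Set.Icc H (⊤ : Subgroup G) := ⟨X, hX⟩ with hx
  set k : Set.Icc H (⊤ : Subgroup G) := ⟨K, hK⟩ with hk
  set m : Set.Icc H (⊤ : Subgroup G) := ⟨M, hM⟩ with hm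
  -- X ⊓ K = H by atomicity
  have hXK : X ⊓ K = H := by
    rcases hatom.eq_or_eq (c := X ⊓ K) (le_inf hX.1 hatom.lt.le) inf_le_right with h | h
    · exact h
    · exact absurd (h ▸ inf_le_left) hKX
  -- distributivity via the order iso
  have distrib : ∀ a b c : Set.Icc H (⊤ : Subgroup G),
      a ⊓ (b ⊔ c) = (a ⊓ b) ⊔ (a ⊓ c) := by
    intro a b c
    apply e.injective
    simp [e.map_inf, e.map_sup, Set.inf_eq_inter, Set.sup_eq_union,
      Set.inter_union_distrib_left]
  have hiccinf : ∀ a b : Set.Icc H (⊤ : Subgroup G),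
      ((a ⊓ b : Set.Icc H (⊤ : Subgroup G)) : Subgroup G) = ↑a ⊓ ↑b := fun _ _ => rfl
  have hiccsup : ∀ a b : Set.Icc H (⊤ : Subgroup G),
      ((a ⊔ b : Set.Icc H (⊤ : Subgroup G)) : Subgroup G) = ↑a ⊔ ↑b := fun _ _ => rfl
  -- X ≤ M
  have hXM : X ≤ M := by
    have h1 : x ⊓ (k ⊔ m) = (x ⊓ k) ⊔ (x ⊓ m) := distrib x k m
    have h2 : X ⊓ (K ⊔ M) = (X ⊓ K) ⊔ (X ⊓ M) := congrArg Subtype.val h1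
    rw [hsup, hXK, inf_top_eq] at h2
    rw [h2]
    exact sup_le hM.1 inf_le_right
  -- Y ⊓ M = X
  have hYM : Y ⊓ M = X := by
    have h1 : m ⊓ (x ⊔ k) = (m ⊓ x) ⊔ (m ⊓ k) := distrib m x k
    have h2 : M ⊓ (X ⊔ K) = (M ⊓ X) ⊔ (M ⊓ K) := congrArg Subtype.val h1
    rw [hY, inf_comm, h2, inf_eq_right.mpr hXM, inf_comm M K, hinf,
      sup_eq_left.mpr hX.1]
  constructor
  · intro h
    have : g ∈ (X : Set G) * ({g} : Set G) := ⟨1, X.one_mem, g, rfl, one_mul g⟩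
    rw [h] at this
    exact this.2
  · intro hg
    ext z
    simp only [Set.mem_inter_iff, Set.mem_mul, Set.mem_singleton_iff]
    constructor
    · rintro ⟨a, ha, b, hb, hab⟩
      have hXY : X ≤ Y := hY ▸ le_sup_left
      refine ⟨⟨a, hXY ha, b, hb, hab⟩, ?_⟩
      rw [← hab, hb]
      exact M.mul_mem (hXM ha) hg
    · rintro ⟨⟨a, ha, b, hb, hab⟩, hmem⟩
      have hbM : b ∈ M := by rw [hb]; exact hg
      rw [← hab] at hmem
      have haM : a ∈ M := by
        have := M.mul_mem hmem (M.inv_mem hbM)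
        simpa using this
      have hax : a ∈ Y ⊓ M := ⟨ha, haM⟩
      rw [hYM] at hax
      exact ⟨a, hax, b, hb, hab⟩
end
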